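/- For an odd prime p, n ≥ 1, a fixed nonsquare unit r in ℤ/pⁿℤ, d ∈ {1, r}, and 0 < i < n: the orbit of [1 : d·pⁱ] ∈ ℙ¹(ℤ/pⁿℤ) under the Borel subgroup Γ₀(ℤ/pⁿℤ) has exactly φ(p^{n-i})/2 elements, where φ is Euler's totient function. -/

import Mathlib

open Matrix

/-- The Borel subgroup `Γ₀(R)` of upper triangular matrices in `SL₂(R)`. -/
def Gamma0 (R : Type*) [CommRing R] : Subgroup (Matrix.SpecialLinearGroup (Fin 2) R) where
  carrier := {A | A.1 1 0 = 0}
  one_mem' := by simp [Matrix.one_apply]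
  mul_mem' := by
    intro a b ha hb
    simp only [Set.mem_setOf_eq] at *
    have : ((a * b : Matrix.SpecialLinearGroup (Fin 2) _)).1 1 0
        = a.1 1 0 * b.1 0 0 + a.1 1 1 * b.1 1 0 := by
      simp [Matrix.mul_apply, Fin.sum_univ_two]
    rw [this, ha, hb]; ring
  inv_mem' := by
    intro a ha
    simp only [Set.mem_setOf_eq] at *
    rw [Matrix.SpecialLinearGroup.SL2_inv_expl]
    simp [ha]

/-- A pair is unimodular (over a local ring) if one of its entries is a unit. -/
def IsUnimodular {R : Type*} [CommRing R] (v : Fin 2 → R) : Prop :=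
  IsUnit (v 0) ∨ IsUnit (v 1)

def P1Setoid (R : Type*) [CommRing R] : Setoid {v : Fin 2 → R // IsUnimodular v} where
  r x y := ∃ u : Rˣ, u • x.1 = y.1
  iseqv := by
    refine ⟨fun x => ⟨1, one_smul _ _⟩, ?_, ?_⟩
    · rintro x y ⟨u, h⟩
      exact ⟨u⁻¹, by rw [← h, inv_smul_smul]⟩
    · rintro x y z ⟨u, h⟩ ⟨w, h2⟩
      exact ⟨w * u, by rw [← h2, ← h]; exact (smul_smul w u x.1).symm ▸ rfl⟩

/-- The projective line over `R`: unimodular pairs up to unit scaling. -/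
def P1 (R : Type*) [CommRing R] := Quotient (P1Setoid R)

def P1.mk {R : Type*} [CommRing R] (v : Fin 2 → R) (h : IsUnimodular v) : P1 R :=
  Quotient.mk (P1Setoid R) ⟨v, h⟩

theorem isUnimodular_mulVec {R : Type*} [CommRing R] [IsLocalRing R]
    (g : Matrix.SpecialLinearGroup (Fin 2) R) {v : Fin 2 → R} (hv : IsUnimodular v) :
    IsUnimodular (g.1.mulVec v) := by
  by_contra h
  rw [IsUnimodular, not_or] at h
  obtain ⟨h0, h1⟩ := h
  have hv' : v = (g⁻¹).1.mulVec (g.1.mulVec v) := by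
    rw [Matrix.mulVec_mulVec, ← Matrix.SpecialLinearGroup.coe_mul, inv_mul_cancel]
    simp
  have key : ∀ i, ¬ IsUnit (v i) := by
    intro i
    rw [hv']
    have hexp : (g⁻¹).1.mulVec (g.1.mulVec v) i
        = (g⁻¹).1 i 0 * (g.1.mulVec v 0) + (g⁻¹).1 i 1 * (g.1.mulVec v 1) := by
      simp [Matrix.mulVec, dotProduct, Fin.sum_univ_two]
    rw [hexp]
    intro hu
    have m0 : (g⁻¹).1 i 0 * (g.1.mulVec v 0) ∈ nonunits R := by
      intro hc
      exact h0 (isUnit_of_mul_isUnit_right hc)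
    have m1 : (g⁻¹).1 i 1 * (g.1.mulVec v 1) ∈ nonunits R := by
      intro hc
      exact h1 (isUnit_of_mul_isUnit_right hc)
    exact (IsLocalRing.nonunits_add m0 m1) hu
  rcases hv with h | h
  · exact key 0 h
  · exact key 1 h

noncomputable instance P1.smul {R : Type*} [CommRing R] [IsLocalRing R] :
    SMul (Matrix.SpecialLinearGroup (Fin 2) R) (P1 R) where
  smul g := Quotient.map
    (fun v => ⟨g.1.mulVec v.1, isUnimodular_mulVec g v.2⟩)
    (by
      rintro x y ⟨u, h⟩
      refine ⟨u, ?_⟩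
      simp only [← h]
      rw [Units.smul_def, Units.smul_def, Matrix.mulVec_smul])

theorem P1.smul_mk {R : Type*} [CommRing R] [IsLocalRing R]
    (g : Matrix.SpecialLinearGroup (Fin 2) R) (v : Fin 2 → R) (h : IsUnimodular v) :
    g • (P1.mk v h) = P1.mk (g.1.mulVec v) (isUnimodular_mulVec g h) := rfl

noncomputable instance P1.mulAction {R : Type*} [CommRing R] [IsLocalRing R] :
    MulAction (Matrix.SpecialLinearGroup (Fin 2) R) (P1 R) where
  one_smul := by
    intro x
    induction x using Quotient.ind with
    | _ v =>
      show Quotient.map _ _ _ = _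
      rw [Quotient.map_mk]
      congr 1
      exact Subtype.ext (by simp)
  mul_smul := by
    intro g h x
    induction x using Quotient.ind with
    | _ v =>
      show Quotient.map _ _ _ = Quotient.map _ _ (Quotient.map _ _ _)
      rw [Quotient.map_mk, Quotient.map_mk, Quotient.map_mk]
      congr 1
      exact Subtype.ext (by
        first
        | (show ((g * h : Matrix.SpecialLinearGroup (Fin 2) R) : Matrix (Fin 2) (Fin 2) R).mulVec v.1
              = (g : Matrix (Fin 2) (Fin 2) R).mulVec ((h : Matrix (Fin 2) (Fin 2) R).mulVec v.1)
           rw [Matrix.SpecialLinearGroup.coe_mul, Matrix.mulVec_mulVec])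
        | (simp [Matrix.mul_apply, Fin.sum_univ_two]; constructor <;> ring))

theorem zmod_pow_isUnit_iff (p : ℕ) [hp : Fact p.Prime] (n : ℕ) [NeZero n]
    (x : ZMod (p^n)) : IsUnit x ↔ ¬ (p ∣ x.val) := by
  haveI : NeZero (p^n) := ⟨pow_ne_zero n hp.out.ne_zero⟩
  conv_lhs => rw [← ZMod.natCast_rightInverse x]
  rw [ZMod.isUnit_iff_coprime]
  rw [Nat.coprime_pow_right_iff (Nat.pos_of_ne_zero (NeZero.ne n))]
  rw [Nat.coprime_comm]
  exact hp.out.coprime_iff_not_dvd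

instance zmod_pow_isLocalRing (p : ℕ) [hp : Fact p.Prime] (n : ℕ) [NeZero n] :
    IsLocalRing (ZMod (p^n)) := by
  haveI : NeZero (p^n) := ⟨pow_ne_zero n hp.out.ne_zero⟩
  haveI : Fact (1 < p^n) :=
    ⟨Nat.one_lt_pow (NeZero.ne n) hp.out.one_lt⟩
  refine IsLocalRing.of_nonunits_add ?_
  intro a b ha hb
  rw [mem_nonunits_iff, zmod_pow_isUnit_iff, not_not] at ha hb ⊢
  rw [ZMod.val_add]
  rw [Nat.dvd_mod_iff (dvd_pow_self p (NeZero.ne n))]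
  exact Nat.dvd_add ha hb

theorem isUnimodular_pair_left {R : Type*} [CommRing R] {a b : R} (h : IsUnit a) :
    IsUnimodular ![a, b] := Or.inl (by simpa using h)

theorem isUnimodular_pair_right {R : Type*} [CommRing R] {a b : R} (h : IsUnit b) :
    IsUnimodular ![a, b] := Or.inr (by simpa using h)


/-!
An element `g = (a b; 0 e)` of `Γ₀` sends `[1 : x]`, for `p ∣ x`, to `[1 : u x]` with
`u = e (a + b x)⁻¹`. Modulo `p` this unit is `e / a = e²`, a square, and since `p` is odd every
unit of `ℤ/pⁿℤ` that is a square modulo `p` is a square (a unit `≡ 1 mod p` has odd order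
dividing `pⁿ⁻¹`). Hence the orbit is `{[1 : c² x] : c unit}`, and the diagonal matrices show
every such point is reached. For `x = d pⁱ` with `d` a unit, `[1 : c² x] = [1 : c'² x]` exactly
when `c² ≡ c'² mod pⁿ⁻ⁱ`, so the orbit is in bijection with the squares of `(ℤ/pⁿ⁻ⁱℤ)ˣ`, a
subgroup of index 2 because the kernel of squaring is `{±1}`.
-/

namespace P1

variable {R : Type*} [CommRing R]

theorem mk_one_eq_mk_one_iff {x y : R} (hx : IsUnimodular ![1, x]) (hy : IsUnimodular ![1, y]) :
    P1.mk ![1, x] hx = P1.mk ![1, y] hy ↔ x = y := by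
  refine ⟨fun h => ?_, fun h => by subst h; rfl⟩
  obtain ⟨u, hu⟩ := Quotient.exact h
  have h0 := congrFun hu 0
  have h1 := congrFun hu 1
  simp only [Pi.smul_apply, Units.smul_def, Matrix.cons_val_zero, Matrix.cons_val_one,
    smul_eq_mul, mul_one] at h0 h1
  rw [← h1, h0, one_mul]

end P1

namespace Gamma0

variable {R : Type*} [CommRing R]

def diag (c : Rˣ) : Gamma0 R :=
  ⟨⟨!![↑c⁻¹, 0; 0, ↑c], by simp [Matrix.det_fin_two]⟩, rfl⟩

variable [IsLocalRing R]

theorem diag_smul_mk_one (c : Rˣ) (x : R) :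
    diag c • P1.mk ![1, x] (isUnimodular_pair_left isUnit_one)
      = P1.mk ![1, ↑c ^ 2 * x] (isUnimodular_pair_left isUnit_one) := by
  rw [Subgroup.smul_def, P1.smul_mk]
  refine Quotient.sound ⟨c, ?_⟩
  ext j; fin_cases j <;> simp [diag, Units.smul_def, sq, mul_comm, mul_left_comm]

theorem smul_mk_one (g : Gamma0 R) (x : R) (w : Rˣ) (hw : (w : R) = g.1 0 0 + g.1 0 1 * x) :
    g • P1.mk ![1, x] (isUnimodular_pair_left isUnit_one)
      = P1.mk ![1, ↑w⁻¹ * (g.1 1 1 * x)] (isUnimodular_pair_left isUnit_one) := by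
  have hg : g.1 1 0 = 0 := g.2
  rw [Subgroup.smul_def, P1.smul_mk]
  refine Quotient.sound ⟨w⁻¹, ?_⟩
  ext j; fin_cases j <;> simp [Units.smul_def, hg, ← hw]

end Gamma0

section LocalRing

variable {R : Type*} [CommRing R] [IsLocalRing R]

theorem IsLocalRing.eq_one_or_eq_neg_one_of_sq_eq_one (h2 : IsUnit (2 : R)) {z : R}
    (hz : z ^ 2 = 1) : z = 1 ∨ z = -1 := by
  have hprod : (z + 1) * (z - 1) = 0 := by linear_combination hz
  have hsum : (z + 1) + -(z - 1) = 2 := by ring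
  rcases IsLocalRing.isUnit_or_isUnit_of_isUnit_add (hsum ▸ h2) with h | h
  · exact Or.inl (sub_eq_zero.mp ((h.mul_right_eq_zero).mp hprod))
  · exact Or.inr (eq_neg_of_add_eq_zero_left
      (((IsUnit.neg_iff _).mp h).mul_left_eq_zero.mp hprod))

theorem IsLocalRing.card_range_sq_units (h2 : IsUnit (2 : R)) :
    Nat.card (Set.range fun u : Rˣ => u ^ 2) = Nat.card Rˣ / 2 := by
  set f := powMonoidHom 2 (α := Rˣ)
  have hker : (f.ker : Set Rˣ) = {1, -1} := by
    ext z
    simp only [SetLike.mem_coe, MonoidHom.mem_ker, f, powMonoidHom_apply,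
      Set.mem_insert_iff, Set.mem_singleton_iff, ← Units.val_inj, Units.val_pow_eq_pow_val,
      Units.val_one, Units.val_neg]
    exact ⟨eq_one_or_eq_neg_one_of_sq_eq_one h2, by rintro (h | h) <;> simp [h]⟩
  have hone : (1 : Rˣ) ≠ -1 := by
    intro h
    have h' : (1 : R) = -1 := by simpa using congrArg Units.val h
    exact not_isUnit_zero ((by linear_combination h' : (2 : R) = 0) ▸ h2)
  have hcard : Nat.card f.ker * Nat.card f.range = Nat.card Rˣ := by
    rw [← Subgroup.index_ker, Subgroup.card_mul_index]
  rw [← SetLike.coe_sort_coe, hker, Nat.card_coe_set_eq, Set.ncard_pair hone] at hcard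
  change Nat.card (Set.range f) = _
  rw [← MonoidHom.coe_range, SetLike.coe_sort_coe]
  omega

end LocalRing

namespace ZMod

theorem natCast_mul_eq_natCast_mul_iff {m a b : ℕ} [NeZero m] (hab : a * b = m) (ha : a ≠ 0)
    (s t : ZMod m) :
    (a : ZMod m) * s = a * t ↔
      castHom (Dvd.intro_left a hab) (ZMod b) s = castHom (Dvd.intro_left a hab) (ZMod b) t := by
  subst hab
  rw [← sub_eq_zero, ← mul_sub, ← sub_eq_zero (a := castHom _ _ s), ← map_sub]
  generalize s - t = u
  rw [← natCast_zmod_val u, map_natCast, ← Nat.cast_mul, natCast_eq_zero_iff,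
    natCast_eq_zero_iff, Nat.mul_dvd_mul_iff_left (Nat.pos_of_ne_zero ha)]

theorem natCast_dvd_of_castHom_eq_zero {m b : ℕ} [NeZero m] (h : b ∣ m) {s : ZMod m}
    (hs : castHom h (ZMod b) s = 0) : (b : ZMod m) ∣ s := by
  rw [← natCast_zmod_val s, map_natCast, natCast_eq_zero_iff] at hs
  obtain ⟨k, hk⟩ := hs
  exact ⟨k, by rw [← natCast_zmod_val s, hk, Nat.cast_mul]⟩

variable {p : ℕ} [Fact p.Prime]

theorem isUnit_two_of_ne_two (hp2 : p ≠ 2) (m : ℕ) : IsUnit (2 : ZMod (p ^ m)) := by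
  have hcop : Nat.Coprime 2 p := (Nat.coprime_primes Nat.prime_two Fact.out).mpr hp2.symm
  exact_mod_cast (isUnit_iff_coprime 2 (p ^ m)).mpr (hcop.pow_right m)

theorem pow_eq_one_of_unitsMap_eq_one {m : ℕ} (hm : m ≠ 0) {u : (ZMod (p ^ m))ˣ}
    (hu : unitsMap (dvd_pow_self p hm) u = 1) : u ^ p ^ (m - 1) = 1 := by
  have hdvd : (p : ZMod (p ^ m)) ∣ (u : ZMod (p ^ m)) - 1 := by
    refine natCast_dvd_of_castHom_eq_zero (dvd_pow_self p hm) ?_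
    rw [map_sub, map_one, sub_eq_zero]
    exact congrArg Units.val hu
  have := dvd_sub_pow_of_dvd_sub hdvd (m - 1)
  rw [Nat.sub_add_cancel (Nat.pos_of_ne_zero hm), ← Nat.cast_pow, natCast_self, zero_dvd_iff,
    one_pow, sub_eq_zero] at this
  exact Units.ext (by rw [Units.val_pow_eq_pow_val, this, Units.val_one])

theorem isSquare_of_isSquare_unitsMap (hp2 : p ≠ 2) {m : ℕ} (hm : m ≠ 0) {u : (ZMod (p ^ m))ˣ}
    (hu : IsSquare (unitsMap (dvd_pow_self p hm) u)) : IsSquare u := by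
  obtain ⟨s, hs⟩ := hu
  obtain ⟨c, rfl⟩ := unitsMap_surjective (dvd_pow_self p hm) s
  set v := u * (c * c)⁻¹
  have hv : v ^ p ^ (m - 1) = 1 :=
    pow_eq_one_of_unitsMap_eq_one hm (by rw [map_mul, map_inv, map_mul, hs, mul_inv_cancel])
  obtain ⟨k, hk⟩ := ((Nat.Prime.odd_of_ne_two Fact.out hp2).pow (n := m - 1))
  refine ⟨c * v ^ (k + 1), ?_⟩
  calc u = c * c * v := by rw [show v = (c * c)⁻¹ * u from mul_comm _ _, mul_inv_cancel_left]
    _ = c * c * v ^ (p ^ (m - 1) + 1) := by rw [pow_succ, hv, one_mul]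
    _ = c * c * (v ^ (k + 1) * v ^ (k + 1)) := by rw [← pow_add, hk]; ring_nf
    _ = c * v ^ (k + 1) * (c * v ^ (k + 1)) := mul_mul_mul_comm _ _ _ _

end ZMod

theorem Set.natCard_range_eq_of_forall_eq_iff {α β γ : Type*} {f : α → β} {g : α → γ}
    (h : ∀ a b, f a = f b ↔ g a = g b) : Nat.card (Set.range f) = Nat.card (Set.range g) :=
  Nat.card_congr <| (Setoid.quotientKerEquivRange f).symm.trans <|
    (Quotient.congrRight h).trans (Setoid.quotientKerEquivRange g)

section Orbit

variable {p : ℕ} [Fact p.Prime] {n : ℕ}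

theorem orbit_mk_one_eq_range_sq_mul [NeZero n] (hp2 : p ≠ 2) {x : ZMod (p ^ n)}
    (hx : (p : ZMod (p ^ n)) ∣ x) :
    MulAction.orbit (Gamma0 (ZMod (p ^ n))) (P1.mk ![1, x] (isUnimodular_pair_left isUnit_one))
      = Set.range fun c : (ZMod (p ^ n))ˣ =>
          P1.mk ![1, ↑c ^ 2 * x] (isUnimodular_pair_left isUnit_one) := by
  ext z
  constructor
  · rintro ⟨g, rfl⟩
    have hdet : g.1 0 0 * g.1 1 1 = 1 := by
      have := g.1.2
      rwa [Matrix.det_fin_two, show g.1.1 1 0 = 0 from g.2, mul_zero, sub_zero] at this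
    set a : (ZMod (p ^ n))ˣ := Units.mkOfMulEqOne _ _ hdet
    have hp_nil : IsNilpotent (p : ZMod (p ^ n)) := ⟨n, by rw [← Nat.cast_pow, ZMod.natCast_self]⟩
    obtain ⟨t, rfl⟩ := hx
    have hbx_nil : IsNilpotent (g.1 0 1 * (p * t)) :=
      (Commute.all _ _).isNilpotent_mul_left ((Commute.all _ _).isNilpotent_mul_right hp_nil)
    set w := (hbx_nil.isUnit_add_left_of_commute a.isUnit (Commute.all _ _)).unit
    have hres : ZMod.unitsMap (dvd_pow_self p (NeZero.ne n)) w
        = ZMod.unitsMap (dvd_pow_self p (NeZero.ne n)) a := by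
      ext
      simp [w, ZMod.unitsMap_def, -ZMod.castHom_apply]
    obtain ⟨c, hc⟩ := ZMod.isSquare_of_isSquare_unitsMap hp2 (NeZero.ne n) (u := w⁻¹ * a⁻¹)
      ⟨(ZMod.unitsMap _ a)⁻¹, by rw [map_mul, map_inv, map_inv, hres]⟩
    refine ⟨c, ?_⟩
    dsimp only
    rw [Gamma0.smul_mk_one g _ w rfl, P1.mk_one_eq_mk_one_iff,
      ← Units.val_pow_eq_pow_val, sq, ← hc, Units.val_mul, mul_assoc]
    rfl
  · rintro ⟨c, rfl⟩
    exact ⟨Gamma0.diag c, Gamma0.diag_smul_mk_one c x⟩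

theorem card_range_mk_one_sq_mul (hp2 : p ≠ 2) {d : ZMod (p ^ n)} (hd : IsUnit d) {i : ℕ}
    (hin : i < n) :
    Nat.card (Set.range fun c : (ZMod (p ^ n))ˣ =>
        P1.mk ![1, ↑c ^ 2 * (d * (p : ZMod (p ^ n)) ^ i)] (isUnimodular_pair_left isUnit_one))
      = (p ^ (n - i)).totient / 2 := by
  have : NeZero (n - i) := ⟨Nat.sub_ne_zero_of_lt hin⟩
  have hpow : p ^ i * p ^ (n - i) = p ^ n := by rw [← pow_add, Nat.add_sub_cancel' hin.le]
  set π := ZMod.unitsMap (Dvd.intro_left _ hpow)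
  have hfiber : ∀ c c' : (ZMod (p ^ n))ˣ,
      P1.mk ![1, ↑c ^ 2 * (d * (p : ZMod (p ^ n)) ^ i)] (isUnimodular_pair_left isUnit_one)
        = P1.mk ![1, ↑c' ^ 2 * (d * (p : ZMod (p ^ n)) ^ i)] (isUnimodular_pair_left isUnit_one)
        ↔ ((· ^ 2) ∘ π) c = ((· ^ 2) ∘ π) c' := by
    intro c c'
    rw [P1.mk_one_eq_mk_one_iff, mul_left_comm _ d, mul_left_comm _ d, hd.mul_right_inj,
      Function.comp_apply, Function.comp_apply, ← map_pow, ← map_pow, ← Units.val_inj,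
      mul_comm, mul_comm (↑c' ^ 2 : ZMod (p ^ n))]
    simp only [π, ZMod.unitsMap_def, Units.coe_map, MonoidHom.coe_coe, Units.val_pow_eq_pow_val]
    exact_mod_cast ZMod.natCast_mul_eq_natCast_mul_iff hpow
      (pow_ne_zero i (Fact.out : p.Prime).ne_zero) _ _
  rw [Set.natCard_range_eq_of_forall_eq_iff hfiber,
    (ZMod.unitsMap_surjective _).range_comp (· ^ 2),
    IsLocalRing.card_range_sq_units (ZMod.isUnit_two_of_ne_two hp2 _), Nat.card_eq_fintype_card,
    ZMod.card_units_eq_totient]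

end Orbit

theorem card_borel_orbit_intermediate_general (p : ℕ) [Fact p.Prime] (hp2 : p ≠ 2) (n : ℕ) [NeZero n]
    (r : ZMod (p ^ n)) (hru : IsUnit r)
    (d : ZMod (p ^ n)) (hd : d = 1 ∨ d = r) (i : ℕ) (hi0 : 0 < i) (hin : i < n) :
    Nat.card (MulAction.orbit (Gamma0 (ZMod (p ^ n)))
        (P1.mk ![1, d * (p : ZMod (p ^ n)) ^ i] (isUnimodular_pair_left isUnit_one)))
      = Nat.totient (p ^ (n - i)) / 2 := by
  have hdu : IsUnit d := by rcases hd with rfl | rfl; exacts [isUnit_one, hru]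
  rw [orbit_mk_one_eq_range_sq_mul hp2 (dvd_mul_of_dvd_right (dvd_pow_self _ hi0.ne') d)]
  exact card_range_mk_one_sq_mul hp2 hdu hin

/-- For an odd prime `p`, `n ≥ 1`, a nonsquare unit `r`, `d ∈ {1, r}` and `0 < i < n`,
the `Γ₀(ℤ/pⁿℤ)`-orbit of `[1 : d·pⁱ]` in `ℙ¹(ℤ/pⁿℤ)` has exactly `φ(p^{n-i})/2` elements. -/
theorem card_borel_orbit_intermediate (p : ℕ) [Fact p.Prime] (hp2 : p ≠ 2) (n : ℕ) [NeZero n]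
    (r : ZMod (p ^ n)) (hru : IsUnit r) (hrns : ¬ IsSquare r)
    (d : ZMod (p ^ n)) (hd : d = 1 ∨ d = r) (i : ℕ) (hi0 : 0 < i) (hin : i < n) :
    Nat.card (MulAction.orbit (Gamma0 (ZMod (p ^ n)))
        (P1.mk ![1, d * (p : ZMod (p ^ n)) ^ i] (isUnimodular_pair_left isUnit_one)))
      = Nat.totient (p ^ (n - i)) / 2 :=
  card_borel_orbit_intermediate_general p hp2 n r hru d hd i hi0 hin
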